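/- arXiv:2306.11323 — 2 statements merged into one kernel-verified Lean document; each statement's English description precedes it below -/
import Mathlib

section
/- Let X be a real n×p matrix with XᵀX = I, let G be an arbitrary real n×p matrix, and define the projected gradient ∇f(X) := G − X(XᵀG + GᵀX)/2. Then ∇f(X) = 0 if and only if G − XGᵀX = 0. -/
open Matrix

/-- For `X` a real `n × p` matrix with `Xᵀ X = I` and `G` an arbitrary real
`n × p` matrix, the projected gradient `∇f(X) = G - X (Xᵀ G + Gᵀ X) / 2` vanishes
if and only if `G - X Gᵀ X = 0`. -/
theorem projected_gradient_zero_iff_first_order_optimality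
    (n p : ℕ) (X G : Matrix (Fin n) (Fin p) ℝ)
    (hX : Xᵀ * X = 1) :
    G - (1 / 2 : ℝ) • (X * (Xᵀ * G + Gᵀ * X)) = 0 ↔ G - X * Gᵀ * X = 0 := by
  rw [sub_eq_zero, sub_eq_zero]
  constructor
  · intro h
    -- from h: XᵀG = (XᵀG + GᵀX)/2, hence XᵀG = GᵀX
    have h1 : Xᵀ * G = (1 / 2 : ℝ) • (Xᵀ * G + Gᵀ * X) := by
      calc Xᵀ * G = Xᵀ * ((1 / 2 : ℝ) • (X * (Xᵀ * G + Gᵀ * X))) := by rw [← h]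
        _ = (1 / 2 : ℝ) • (Xᵀ * X * (Xᵀ * G + Gᵀ * X)) := by
            rw [Matrix.mul_smul, Matrix.mul_assoc]
        _ = (1 / 2 : ℝ) • (Xᵀ * G + Gᵀ * X) := by rw [hX, one_mul]
    have h2 : Xᵀ * G = Gᵀ * X := by
      have := h1
      rw [smul_add] at this
      have h4 : (1 / 2 : ℝ) • (Xᵀ * G) = (1 / 2 : ℝ) • (Gᵀ * X) := by
        linear_combination (norm := module) this
      have := smul_right_injective (Matrix (Fin p) (Fin p) ℝ)
        (by norm_num : (1 / 2 : ℝ) ≠ 0) h4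
      exact this
    calc G = (1 / 2 : ℝ) • (X * (Xᵀ * G + Gᵀ * X)) := h
      _ = (1 / 2 : ℝ) • (X * (Gᵀ * X + Gᵀ * X)) := by rw [h2]
      _ = X * Gᵀ * X := by
          rw [← two_smul ℝ (Gᵀ * X), Matrix.mul_smul, smul_smul]
          norm_num [Matrix.mul_assoc]
  · intro h
    have h2 : Xᵀ * G = Gᵀ * X := by
      calc Xᵀ * G = Xᵀ * (X * Gᵀ * X) := by rw [← h]
        _ = Xᵀ * X * Gᵀ * X := by simp [Matrix.mul_assoc]
        _ = Gᵀ * X := by rw [hX]; simp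
    calc G = X * Gᵀ * X := h
      _ = (1 / 2 : ℝ) • (X * (Xᵀ * G + Gᵀ * X)) := by
          rw [h2, ← two_smul ℝ (Gᵀ * X), Matrix.mul_smul, smul_smul]
          norm_num [Matrix.mul_assoc]
end

section
/- Let Z be a real n×p matrix such that ZᵀZ is positive definite, let S be the positive semidefinite square root of ZᵀZ, and set Q₀ := Z S⁻¹. Then for every real n×p matrix Q with QᵀQ = I, one has ‖Z − Q₀‖_F ≤ ‖Z − Q‖_F. That is, the polar factor Z(ZᵀZ)^{-1/2} is a minimizer of ‖Z − Q‖_F over the Stiefel manifold. -/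
/-!
Expanding the squares gives `‖Z - Q‖_F² = tr (Zᵀ Z) + tr I - 2 tr (Qᵀ Z)` whenever `Qᵀ Q = I`,
so it suffices to show `tr (Qᵀ Z) ≤ tr S`, with equality at `Q₀`. Since `Z = Q₀ S` with
`Q₀ᵀ Q₀ = I`, this is `0 ≤ tr ((Q - Q₀) S (Q - Q₀)ᵀ) = 2 tr S - 2 tr (Qᵀ Q₀ S)`, which holds
because `S` is positive semidefinite.
-/
open Matrix

/-- The Frobenius norm of a real matrix, `‖A‖_F = sqrt (trace (Aᵀ A))`. -/
noncomputable def frobNorm {n p : ℕ} (A : Matrix (Fin n) (Fin p) ℝ) : ℝ :=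
  Real.sqrt ((Aᵀ * A).trace)

/-- The positive semidefinite square root of a positive semidefinite matrix, as
`Matrix.PosSemidef.sqrt` was defined in Mathlib of December 2024 (since removed). -/
noncomputable def Matrix.PosSemidef.sqrt {n : Type*} [Fintype n] [DecidableEq n]
    {A : Matrix n n ℝ} (hA : A.PosSemidef) : Matrix n n ℝ :=
  (hA.1.eigenvectorUnitary : Matrix n n ℝ) * diagonal (Real.sqrt ∘ hA.1.eigenvalues) *
    (star hA.1.eigenvectorUnitary : Matrix n n ℝ)

namespace Matrix

namespace PosSemidef

variable {n : Type*} [Fintype n] [DecidableEq n] {A : Matrix n n ℝ} (hA : A.PosSemidef)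

lemma sqrt_eq_cfc : hA.sqrt = cfc Real.sqrt A := by
  rw [hA.1.cfc_eq, IsHermitian.cfc, Unitary.conjStarAlgAut_apply]
  simp [sqrt]

open MatrixOrder in
lemma posSemidef_sqrt : hA.sqrt.PosSemidef := by
  rw [sqrt_eq_cfc, ← nonneg_iff_posSemidef]
  exact cfc_nonneg fun x _ => Real.sqrt_nonneg x

open MatrixOrder in
lemma sqrt_mul_self : hA.sqrt * hA.sqrt = A := by
  rw [sqrt_eq_cfc, ← cfc_mul Real.sqrt Real.sqrt A]
  conv_rhs => rw [← cfc_id' ℝ A]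
  exact cfc_congr fun x hx => Real.mul_self_sqrt (spectrum_nonneg_of_nonneg hA.nonneg hx)

end PosSemidef

lemma PosDef.isUnit_det_sqrt {n : Type*} [Fintype n] [DecidableEq n] {A : Matrix n n ℝ}
    (hA : A.PosDef) : IsUnit hA.posSemidef.sqrt.det := by
  refine isUnit_of_mul_isUnit_left (y := hA.posSemidef.sqrt.det) ?_
  rw [← det_mul, hA.posSemidef.sqrt_mul_self]
  exact hA.isUnit.map detMonoidHom

variable {m n : Type*} [Fintype m] [Fintype n]

lemma trace_transpose_sub_mul_sub (A B : Matrix m n ℝ) :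
    ((A - B)ᵀ * (A - B)).trace = (Aᵀ * A).trace - 2 * (Bᵀ * A).trace + (Bᵀ * B).trace := by
  have hBA : (Aᵀ * B).trace = (Bᵀ * A).trace := by
    rw [← trace_transpose, transpose_mul, transpose_transpose]
  simp only [transpose_sub, Matrix.sub_mul, Matrix.mul_sub, trace_sub, hBA]
  ring

lemma trace_transpose_mul_mul_le_trace [DecidableEq n] {Q Q₀ : Matrix m n ℝ} (hQ : Qᵀ * Q = 1)
    (hQ₀ : Q₀ᵀ * Q₀ = 1) {S : Matrix n n ℝ} (hS : S.PosSemidef) :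
    (Qᵀ * Q₀ * S).trace ≤ S.trace := by
  have hsymm : (Q₀ᵀ * Q * S).trace = (Qᵀ * Q₀ * S).trace := by
    rw [← trace_transpose, transpose_mul, transpose_mul, transpose_transpose,
      (isHermitian_iff_isSymm.mp hS.1).eq, trace_mul_comm, Matrix.mul_assoc]
  have hnonneg : 0 ≤ ((Q - Q₀)ᵀ * (Q - Q₀) * S).trace := by
    rw [Matrix.mul_assoc, trace_mul_comm]
    simpa [conjTranspose_eq_transpose_of_trivial]
      using (hS.mul_mul_conjTranspose_same (Q - Q₀)).trace_nonneg
  simp only [transpose_sub, Matrix.sub_mul, Matrix.mul_sub, trace_sub, hQ, hQ₀, one_mul, hsymm]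
    at hnonneg
  linarith

section PolarFactor

variable [DecidableEq n] {Z : Matrix m n ℝ} {S : Matrix n n ℝ}

lemma transpose_mul_nonsing_inv_mul_self (hS : Sᵀ = S) (hSZ : S * S = Zᵀ * Z)
    (hdet : IsUnit S.det) : (Z * S⁻¹)ᵀ * Z = S := by
  rw [transpose_mul, transpose_nonsing_inv, hS, Matrix.mul_assoc, ← hSZ,
    nonsing_inv_mul_cancel_left _ _ hdet]

lemma transpose_mul_nonsing_inv_mul_mul_nonsing_inv (hS : Sᵀ = S) (hSZ : S * S = Zᵀ * Z)
    (hdet : IsUnit S.det) : (Z * S⁻¹)ᵀ * (Z * S⁻¹) = 1 := by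
  rw [← Matrix.mul_assoc, transpose_mul_nonsing_inv_mul_self hS hSZ hdet,
    mul_nonsing_inv _ hdet]

end PolarFactor

end Matrix

/-- If `Zᵀ Z` is positive definite with positive semidefinite square root
`S`, and `Q₀ = Z S⁻¹`, then for every `Q` with `Qᵀ Q = I` one has
`‖Z - Q₀‖_F ≤ ‖Z - Q‖_F`: the polar factor minimizes the Frobenius distance to `Z`
over the Stiefel manifold. -/
theorem polar_factor_minimizes_frobenius_distance
    (n p : ℕ) (Z : Matrix (Fin n) (Fin p) ℝ)
    (hZ : (Zᵀ * Z).PosDef) :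
    ∀ Q : Matrix (Fin n) (Fin p) ℝ, Qᵀ * Q = 1 →
      frobNorm (Z - Z * (hZ.posSemidef.sqrt)⁻¹) ≤ frobNorm (Z - Q) := by
  intro Q hQ
  set S := hZ.posSemidef.sqrt
  have hS : S.PosSemidef := hZ.posSemidef.posSemidef_sqrt
  have hSsymm : Sᵀ = S := (isHermitian_iff_isSymm.mp hS.1).eq
  have hSZ : S * S = Zᵀ * Z := hZ.posSemidef.sqrt_mul_self
  have hdet : IsUnit S.det := hZ.isUnit_det_sqrt
  have hQ₀ : (Z * S⁻¹)ᵀ * (Z * S⁻¹) = 1 :=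
    transpose_mul_nonsing_inv_mul_mul_nonsing_inv hSsymm hSZ hdet
  have hQZ : (Qᵀ * Z).trace ≤ S.trace :=
    calc (Qᵀ * Z).trace = (Qᵀ * (Z * S⁻¹) * S).trace := by
          rw [Matrix.mul_assoc Qᵀ, nonsing_inv_mul_cancel_right _ _ hdet]
      _ ≤ S.trace := trace_transpose_mul_mul_le_trace hQ hQ₀ hS
  refine Real.sqrt_le_sqrt ?_
  rw [trace_transpose_sub_mul_sub, trace_transpose_sub_mul_sub, hQ, hQ₀,
    transpose_mul_nonsing_inv_mul_self hSsymm hSZ hdet]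
  linarith
end
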